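/- arXiv:1409.1015 — 3 statements merged into one kernel-verified Lean document; each statement's English description precedes it below -/
import Mathlib

section
/- Let $n>0$ be a real number and define $S_{n,0}(x)=\sum_{k=0}^{\infty}\left(e^{-nx}\frac{(nx)^k}{k!}\right)^2$ for $x\ge0$. Then for all $x\ge0$, $S_{n,0}(x)=\frac{1}{\pi}\int_{-1}^{1} e^{-2nx(1+t)}\,\frac{dt}{\sqrt{1-t^2}}$. -/
/-!
Substituting `t = cos θ` turns the right-hand side into `e^{-2nx} / π * ∫₀^π e^{-2nx cos θ} dθ`.
Expanding the exponential termwise, the odd moments `∫₀^π cos^(2m+1)` vanish and the even ones are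
`π (2m)! / (4^m (m!)²)` by the reduction formula, so the integral is `π I₀(2nx)` with
`I₀(z) = ∑ (z/2)^(2m) / (m!)²`; squaring the terms of the left-hand side gives `e^{-2nx} I₀(2nx)`
directly.
-/

open Real Set MeasureTheory intervalIntegral
open scoped Nat

noncomputable def besselI0 (z : ℝ) : ℝ := ∑' m : ℕ, (z / 2) ^ (2 * m) / (m ! : ℝ) ^ 2

theorem besselI0_neg (z : ℝ) : besselI0 (-z) = besselI0 z := by
  simp only [besselI0, neg_div, (even_two_mul _).neg_pow]

theorem integral_div_sqrt_one_sub_sq_eq_integral_comp_cos (f : ℝ → ℝ) :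
    ∫ t in (-1 : ℝ)..1, f t / √(1 - t ^ 2) = ∫ θ in 0..π, f (cos θ) := by
  have himage : cos '' Ioo 0 π = Ioo (-1) 1 := cosPartialHomeomorph.image_source_eq_target
  rw [integral_of_le (by norm_num), integral_of_le pi_pos.le, integral_Ioc_eq_integral_Ioo,
    integral_Ioc_eq_integral_Ioo, ← himage,
    integral_image_eq_integral_abs_deriv_smul measurableSet_Ioo
      (fun θ _ => (hasDerivAt_cos θ).hasDerivWithinAt) (injOn_cos.mono Ioo_subset_Icc_self)]
  refine setIntegral_congr_fun measurableSet_Ioo fun θ hθ => ?_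
  have hsin : 0 < sin θ := sin_pos_of_pos_of_lt_pi hθ.1 hθ.2
  rw [← sin_sq, sqrt_sq hsin.le, abs_neg, abs_of_pos hsin, smul_eq_mul, mul_div_cancel₀ _ hsin.ne']

theorem integral_cos_pow_add_two_zero_pi (k : ℕ) :
    ∫ θ in 0..π, cos θ ^ (k + 2) = (k + 1) / (k + 2) * ∫ θ in 0..π, cos θ ^ k := by
  simp [integral_cos_pow]

theorem integral_cos_pow_odd_zero_pi (m : ℕ) : ∫ θ in 0..π, cos θ ^ (2 * m + 1) = 0 := by
  induction m with
  | zero => simp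
  | succ m ih => rw [show 2 * (m + 1) + 1 = 2 * m + 1 + 2 by ring,
      integral_cos_pow_add_two_zero_pi, ih, mul_zero]

theorem integral_cos_pow_even_zero_pi (m : ℕ) :
    ∫ θ in 0..π, cos θ ^ (2 * m) = π * (2 * m)! / (4 ^ m * (m ! : ℝ) ^ 2) := by
  induction m with
  | zero => simp
  | succ m ih =>
    rw [show 2 * (m + 1) = 2 * m + 2 by ring, integral_cos_pow_add_two_zero_pi, ih,
      Nat.factorial_succ, Nat.factorial_succ, Nat.factorial_succ]
    push_cast
    field_simp
    ring

theorem hasSum_integral_exp_mul_cos_zero_pi (a : ℝ) :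
    HasSum (fun k : ℕ => a ^ k / k ! * ∫ θ in 0..π, cos θ ^ k)
      (∫ θ in 0..π, exp (a * cos θ)) := by
  have hexp (y : ℝ) : HasSum (fun k : ℕ => y ^ k / k !) (exp y) := by
    simpa [exp_eq_exp_ℝ] using NormedSpace.expSeries_div_hasSum_exp y
  have h := hasSum_integral_of_dominated_convergence (μ := volume) (a := 0) (b := π)
    (F := fun (k : ℕ) θ => (a * cos θ) ^ k / k !) (fun k _ => |a| ^ k / k !)
    (fun k => by fun_prop) ?_ ?_ intervalIntegrable_const
    (ae_of_all _ fun θ _ => hexp (a * cos θ))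
  · simpa only [mul_pow, mul_div_right_comm, intervalIntegral.integral_const_mul] using h
  · refine fun k => ae_of_all _ fun θ _ => ?_
    rw [norm_div, norm_pow, norm_mul, Real.norm_natCast, norm_eq_abs, norm_eq_abs]
    gcongr
    exact mul_le_of_le_one_right (abs_nonneg a) (abs_cos_le_one θ)
  · exact ae_of_all _ fun _ _ => (hexp |a|).summable

theorem integral_exp_mul_cos_zero_pi (a : ℝ) : ∫ θ in 0..π, exp (a * cos θ) = π * besselI0 a := by
  have hodd : ∀ k ∉ range (2 * ·), a ^ k / k ! * ∫ θ in 0..π, cos θ ^ k = 0 := by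
    rintro k hk
    obtain ⟨m, rfl⟩ : Odd k :=
      Nat.not_even_iff_odd.mp fun ⟨r, hr⟩ => hk ⟨r, by dsimp only; omega⟩
    rw [integral_cos_pow_odd_zero_pi, mul_zero]
  have h := hasSum_integral_exp_mul_cos_zero_pi a
  rw [← (mul_right_injective₀ two_ne_zero).hasSum_iff hodd] at h
  rw [← h.tsum_eq, besselI0, ← tsum_mul_left]
  refine tsum_congr fun m => ?_
  rw [Function.comp_apply, integral_cos_pow_even_zero_pi, div_pow, pow_mul 2,
    show (2 : ℝ) ^ 2 = 4 by norm_num]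
  field_simp

theorem tsum_sq_exp_neg_mul_pow_div_factorial (y : ℝ) :
    ∑' k : ℕ, (exp (-y) * y ^ k / k !) ^ 2 = exp (-(2 * y)) * besselI0 (2 * y) := by
  rw [besselI0, ← tsum_mul_left]
  refine tsum_congr fun k => ?_
  rw [show -(2 * y) = -y + -y by ring, exp_add]
  field_simp
  ring

theorem stmt_4_general (n : ℝ) (x : ℝ) :
    (∑' k : ℕ, (Real.exp (-n * x) * (n * x) ^ k / (k.factorial : ℝ)) ^ 2) =
    (1 / Real.pi) * ∫ t in (-1:ℝ)..1,
      Real.exp (-2 * n * x * (1 + t)) / Real.sqrt (1 - t ^ 2) := by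
  have hsplit (θ : ℝ) :
      exp (-2 * n * x * (1 + θ)) = exp (-(2 * (n * x))) * exp (-(2 * (n * x)) * θ) := by
    rw [← exp_add]; ring_nf
  rw [neg_mul, tsum_sq_exp_neg_mul_pow_div_factorial,
    integral_div_sqrt_one_sub_sq_eq_integral_comp_cos]
  simp only [hsplit, intervalIntegral.integral_const_mul, integral_exp_mul_cos_zero_pi, besselI0_neg]
  field_simp

/-- For `n > 0`,
`S_{n,0}(x) = ∑ (e^{-nx}(nx)^k/k!)² = (1/π) ∫_{-1}^1 e^{-2nx(1+t)} dt/√(1-t²)`. -/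
theorem stmt_4 (n : ℝ) (hn : 0 < n) (x : ℝ) (hx : 0 ≤ x) :
    (∑' k : ℕ, (Real.exp (-n * x) * (n * x) ^ k / (k.factorial : ℝ)) ^ 2) =
    (1 / Real.pi) * ∫ t in (-1:ℝ)..1,
      Real.exp (-2 * n * x * (1 + t)) / Real.sqrt (1 - t ^ 2) :=
  stmt_4_general n x
end

section
/- Let $c>0$ and $n>c$ be real numbers, and define $H(x)=\sum_{k=0}^{\infty}\left(\frac{(n/c)_k}{k!}(-x)^k(1-x)^{-n/c-k}\right)^2$ for $x\le0$ (that is, $H(x)=S_{n,c}(-x/c)$ where $S_{n,c}$ is the sum of squared Baskakov-type fundamental functions). Then $H$ is twice differentiable on $(-\infty,0)$ and for every $x<0$, $H''(x)+\left(\frac{1}{x}+\frac{1}{x-1}+\frac{2n/c}{x-1/2}\right)H'(x)+\frac{(2n/c)x-n/c}{x(x-1)(x-1/2)}\,H(x)=0$; that is, $H$ satisfies the Heun equation with parameters $\alpha=1$, $\beta=2n/c$, $\gamma=1$, $\delta=1$, $\epsilon=2n/c$ and accessory parameter $q=n/c$. -/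
open Filter Topology FormalMultilinearSeries
open scoped Nat

/-!
With `a = n / c` and `T = x² / (1 - x)²`, the `k`-th summand of `H x` is
`(1 - x)^(-2a) ((a)ₖ / k!)² Tᵏ`, so `H x = (1 - x)^(-2a) ₂F₁(a, a; 1; T)` for `x < 1`.
The coefficients of `₂F₁(a, a; 1; t)` grow polynomially, so the series may be differentiated
termwise on `|t| < 1`, and their recurrence `(k + 1)² cₖ₊₁ = (k + a)² cₖ` is, coefficient by
coefficient, the hypergeometric equation `t(1 - t)F'' + (1 - (2a + 1)t)F' - a²F = 0`.
As `|T| < 1` for `x < 1/2`, the chain rule turns this equation for `F` into the Heun equation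
for `H = (1 - x)^(-2a) F(T)`.
-/

def PolynomiallyBounded (b : ℕ → ℝ) : Prop :=
  ∃ C : ℝ, ∃ M : ℕ, ∀ k, |b k| ≤ C * ((k : ℝ) + 1) ^ M

def derivCoeff (b : ℕ → ℝ) (k : ℕ) : ℝ := ((k : ℝ) + 1) * b (k + 1)

lemma summable_succ_pow_mul_geometric (M : ℕ) {r : ℝ} (hr : |r| < 1) :
    Summable fun k : ℕ => ((k : ℝ) + 1) ^ M * |r| ^ k := by
  simp_rw [add_pow, one_pow, mul_one, Finset.sum_mul]
  refine summable_sum fun i _ => ?_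
  simpa only [mul_right_comm] using
    (summable_pow_mul_geometric_of_norm_lt_one i (r := |r|) (by simpa using hr)).mul_right
      (M.choose i : ℝ)

lemma HasSum.mul_pow_shift {f g : ℕ → ℝ} {t s : ℝ} (hf : HasSum (fun k => f k * t ^ k) s)
    (hg₀ : g 0 = 0) (hg : ∀ k, g (k + 1) = f k) : HasSum (fun k => g k * t ^ k) (t * s) := by
  rw [← hasSum_nat_add_iff' 1]
  simpa [hg₀, hg, pow_succ, mul_comm, mul_left_comm] using hf.mul_left t

namespace PolynomiallyBounded

variable {b : ℕ → ℝ}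

lemma summable (hb : PolynomiallyBounded b) {t : ℝ} (ht : |t| < 1) :
    Summable fun k => b k * t ^ k := by
  obtain ⟨C, M, hCM⟩ := hb
  refine .of_norm_bounded ((summable_succ_pow_mul_geometric M ht).mul_left C) fun k => ?_
  rw [Real.norm_eq_abs, abs_mul, abs_pow, ← mul_assoc]
  exact mul_le_mul_of_nonneg_right (hCM k) (by positivity)

lemma hasSum (hb : PolynomiallyBounded b) {t : ℝ} (ht : |t| < 1) :
    HasSum (fun k => b k * t ^ k) (ofScalarsSum b t) := by
  simpa only [ofScalars_sum_eq, smul_eq_mul] using (hb.summable ht).hasSum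

lemma deriv (hb : PolynomiallyBounded b) : PolynomiallyBounded (derivCoeff b) := by
  obtain ⟨C, M, hCM⟩ := hb
  have hC : 0 ≤ C := by simpa using (abs_nonneg _).trans (hCM 0)
  refine ⟨2 ^ M * C, M + 1, fun k => ?_⟩
  have hk : |b (k + 1)| ≤ C * (2 * ((k : ℝ) + 1)) ^ M :=
    (hCM (k + 1)).trans (by push_cast; gcongr; linarith)
  calc |derivCoeff b k| = ((k : ℝ) + 1) * |b (k + 1)| := by
        rw [derivCoeff, abs_mul, abs_of_pos (by positivity)]
    _ ≤ ((k : ℝ) + 1) * (C * (2 * ((k : ℝ) + 1)) ^ M) := by gcongr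
    _ = 2 ^ M * C * ((k : ℝ) + 1) ^ (M + 1) := by rw [mul_pow, pow_succ]; ring

lemma hasDerivAt (hb : PolynomiallyBounded b) {t : ℝ} (ht : |t| < 1) :
    HasDerivAt (ofScalarsSum b) (ofScalarsSum (derivCoeff b) t) t := by
  obtain ⟨r, htr, hr1⟩ := exists_between ht
  have hr : 0 < r := (abs_nonneg t).trans_lt htr
  have ht_mem : t ∈ Set.Ioo (-r) r := abs_lt.mp htr
  obtain ⟨C, M, hCM⟩ := hb.deriv
  have hC : 0 ≤ C := by simpa using (abs_nonneg _).trans (hCM 0)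
  let u : ℕ → ℝ := fun k => C / r * (((k : ℝ) + 1) ^ M * r ^ k)
  have hu : Summable u := by
    simpa [abs_of_pos hr] using
      (summable_succ_pow_mul_geometric M (r := r) (by rwa [abs_of_pos hr])).mul_left (C / r)
  have hbound : ∀ k, ∀ y ∈ Set.Ioo (-r) r, ‖b k * (k * y ^ (k - 1))‖ ≤ u k := by
    rintro (_ | k) y hy
    · simp only [Nat.cast_zero, zero_mul, mul_zero, norm_zero, u]; positivity
    · have hy : |y| ≤ r := (abs_lt.mpr hy).le
      calc ‖b (k + 1) * ((k + 1 : ℕ) * y ^ (k + 1 - 1))‖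
          = |derivCoeff b k| * |y| ^ k := by
            simp only [derivCoeff, norm_mul, Real.norm_eq_abs, abs_mul, abs_pow]
            push_cast; ring
        _ ≤ C * ((k : ℝ) + 1) ^ M * r ^ k := by gcongr; exact hCM k
        _ ≤ C * ((k : ℝ) + 1 + 1) ^ M * r ^ k := by gcongr; linarith
        _ = u (k + 1) := by simp only [u]; push_cast; field_simp; ring
  have htermwise := hasDerivAt_tsum_of_isPreconnected hu isOpen_Ioo isPreconnected_Ioo
    (fun k y _ => (hasDerivAt_pow k y).const_mul (b k)) hbound ht_mem (hb.summable ht) ht_mem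
  have hsum : Summable fun k => b k * (k * t ^ (k - 1)) := .of_norm_bounded hu (hbound · t ht_mem)
  have hF : ofScalarsSum b = fun y : ℝ => ∑' k, b k * y ^ k := by
    ext y; simp only [ofScalars_sum_eq, smul_eq_mul]
  have hF' : ofScalarsSum (derivCoeff b) t = ∑' k, b k * (k * t ^ (k - 1)) := by
    rw [ofScalars_sum_eq, hsum.tsum_eq_zero_add]
    simp [derivCoeff, mul_comm, mul_left_comm]
  rw [hF, hF']
  exact htermwise

theorem hypergeometric_ode {α β γ : ℝ} (hb : PolynomiallyBounded b)
    (hrec : ∀ k : ℕ, ((k : ℝ) + 1) * (k + γ) * b (k + 1) = (k + α) * (k + β) * b k)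
    {t : ℝ} (ht : |t| < 1) :
    t * (1 - t) * ofScalarsSum (derivCoeff (derivCoeff b)) t +
      (γ - (α + β + 1) * t) * ofScalarsSum (derivCoeff b) t - α * β * ofScalarsSum b t = 0 := by
  have h₀ := hb.hasSum ht
  have h₁ := hb.deriv.hasSum ht
  have h₂ := hb.deriv.deriv.hasSum ht
  -- multiplying by `t` shifts coefficients: these are the series of `t F''`, `t² F''` and `t F'`
  have h₂t := h₂.mul_pow_shift (g := fun k => k * (k + 1) * b (k + 1)) (by simp)
    (fun k => by simp only [derivCoeff]; push_cast; ring)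
  have h₂tt := h₂t.mul_pow_shift (g := fun k => (k - 1) * k * b k) (by simp)
    (fun k => by push_cast; ring)
  have h₁t := h₁.mul_pow_shift (g := fun k => k * b k) (by simp)
    (fun k => by simp only [derivCoeff]; push_cast; ring)
  have hsum := (((h₂t.sub h₂tt).add (h₁.mul_left γ)).sub (h₁t.mul_left (α + β + 1))).sub
    (h₀.mul_left (α * β))
  have hzero : _ = (0 : ℝ) := hsum.unique <| by
    convert hasSum_zero with k
    simp only [derivCoeff]
    linear_combination t ^ k * hrec k
  linear_combination hzero

end PolynomiallyBounded

lemma pow_mul_add_le_add_one_pow_mul {y : ℝ} (hy : 0 ≤ y) (m : ℕ) :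
    y ^ m * (y + m) ≤ (y + 1) ^ m * y := by
  induction m with
  | zero => simp
  | succ m ih =>
    have hpow : y ^ m ≤ (y + 1) ^ m := pow_le_pow_left₀ hy (by linarith) m
    push_cast
    calc y ^ (m + 1) * (y + (m + 1)) = y * (y ^ m * (y + m)) + y ^ m * y := by ring
      _ ≤ y * ((y + 1) ^ m * y) + (y + 1) ^ m * y := by gcongr
      _ = (y + 1) ^ (m + 1) * y := by ring

lemma abs_ascPochhammer_eval_div_factorial_le {a : ℝ} {m : ℕ} (ha : |a| ≤ m) (k : ℕ) :
    |(ascPochhammer ℝ k).eval a / k !| ≤ ((k : ℝ) + 1) ^ m := by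
  induction k with
  | zero => simp
  | succ k ih =>
    have hk : (0 : ℝ) < k + 1 := by positivity
    have hak : |a + k| ≤ (k + 1 : ℝ) + m - 1 := by
      linarith [abs_add_le a k, abs_of_nonneg (k.cast_nonneg : (0 : ℝ) ≤ k)]
    calc |(ascPochhammer ℝ (k + 1)).eval a / (k + 1)!|
        = |(ascPochhammer ℝ k).eval a / k !| * (|a + k| / (k + 1)) := by
          rw [← abs_of_pos hk, ← abs_div, ← abs_mul, ascPochhammer_succ_eval, Nat.factorial_succ]
          push_cast
          field_simp
      _ ≤ ((k : ℝ) + 1) ^ m * (((k + 1 : ℝ) + m) / (k + 1)) := by gcongr; linarith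
      _ ≤ (((k + 1 : ℕ) : ℝ) + 1) ^ m := by
          rw [mul_div_assoc', div_le_iff₀ hk]
          push_cast
          exact pow_mul_add_le_add_one_pow_mul hk.le m

lemma ordinaryHypergeometricCoefficient_one (a b : ℝ) (k : ℕ) :
    ordinaryHypergeometricCoefficient a b 1 k =
      (ascPochhammer ℝ k).eval a / k ! * ((ascPochhammer ℝ k).eval b / k !) := by
  rw [ordinaryHypergeometricCoefficient, ascPochhammer_eval_one]
  ring

lemma ordinaryHypergeometricCoefficient_one_succ (a b : ℝ) (k : ℕ) :
    ((k : ℝ) + 1) * (k + 1) * ordinaryHypergeometricCoefficient a b 1 (k + 1) =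
      (k + a) * (k + b) * ordinaryHypergeometricCoefficient a b 1 k := by
  simp only [ordinaryHypergeometricCoefficient_one, ascPochhammer_succ_eval, Nat.factorial_succ]
  push_cast
  field_simp
  ring

lemma polynomiallyBounded_ordinaryHypergeometricCoefficient_one (a b : ℝ) :
    PolynomiallyBounded (ordinaryHypergeometricCoefficient a b 1) := by
  refine ⟨1, ⌈|a|⌉₊ + ⌈|b|⌉₊, fun k => ?_⟩
  rw [ordinaryHypergeometricCoefficient_one, abs_mul, one_mul, pow_add]
  exact mul_le_mul (abs_ascPochhammer_eval_div_factorial_le (Nat.le_ceil _) k)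
    (abs_ascPochhammer_eval_div_factorial_le (Nat.le_ceil _) k) (abs_nonneg _) (by positivity)

lemma tsum_sq_eq_ordinaryHypergeometric (a : ℝ) {x : ℝ} (hx : x < 1) :
    ∑' k : ℕ, ((ascPochhammer ℝ k).eval a / k ! * (-x) ^ k * (1 - x) ^ (-a - k)) ^ 2 =
      (1 - x) ^ (-(2 * a)) * ₂F₁ a a 1 (x ^ 2 / (1 - x) ^ 2) := by
  have hx' : 0 < 1 - x := by linarith
  rw [ordinaryHypergeometric_eq_tsum, ← tsum_mul_left]
  congr 1 with k
  have hE : (1 - x) ^ (-(2 * a)) = ((1 - x) ^ (-a)) ^ 2 := by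
    rw [← Real.rpow_mul_natCast hx'.le]; ring_nf
  rw [Real.rpow_sub hx', Real.rpow_natCast, hE, ascPochhammer_eval_one, smul_eq_mul, mul_pow,
    mul_pow, div_pow _ ((1 - x) ^ k), pow_right_comm (-x), neg_sq, pow_right_comm (1 - x),
    div_pow (x ^ 2)]
  field_simp

theorem hasDerivAt_deriv_of_isOpen {𝕜 F : Type*} [NontriviallyNormedField 𝕜]
    [NormedAddCommGroup F] [NormedSpace 𝕜 F] {f f' f'' : 𝕜 → F} {U : Set 𝕜} (hU : IsOpen U)
    (hf : ∀ x ∈ U, HasDerivAt f (f' x) x) (hf' : ∀ x ∈ U, HasDerivAt f' (f'' x) x) {x : 𝕜}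
    (hx : x ∈ U) : HasDerivAt (deriv f) (f'' x) x :=
  (hf' x hx).congr_of_eventuallyEq <| eventually_of_mem (hU.mem_nhds hx) fun y hy => (hf y hy).deriv

lemma hasDerivAt_sq_div_one_sub_sq {x : ℝ} (hx : x ≠ 1) :
    HasDerivAt (fun y => y ^ 2 / (1 - y) ^ 2) (2 * x / (1 - x) ^ 3) x := by
  have hx' : 1 - x ≠ 0 := sub_ne_zero.mpr hx.symm
  refine ((hasDerivAt_pow 2 x).fun_div (((hasDerivAt_id' x).const_sub 1).fun_pow 2)
    (pow_ne_zero 2 hx')).congr_deriv ?_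
  field_simp
  ring

lemma hasDerivAt_two_mul_div_one_sub_pow_three {x : ℝ} (hx : x ≠ 1) :
    HasDerivAt (fun y => 2 * y / (1 - y) ^ 3) ((2 + 4 * x) / (1 - x) ^ 4) x := by
  have hx' : 1 - x ≠ 0 := sub_ne_zero.mpr hx.symm
  refine (((hasDerivAt_id' x).const_mul 2).fun_div (((hasDerivAt_id' x).const_sub 1).fun_pow 3)
    (pow_ne_zero 3 hx')).congr_deriv ?_
  field_simp
  ring

lemma hasDerivAt_one_sub_rpow_mul_comp {F F' : ℝ → ℝ} (p : ℝ) {x : ℝ} (hx : x < 1)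
    (hF : HasDerivAt F (F' (x ^ 2 / (1 - x) ^ 2)) (x ^ 2 / (1 - x) ^ 2)) :
    HasDerivAt (fun y => (1 - y) ^ p * F (y ^ 2 / (1 - y) ^ 2))
      (-p * (1 - x) ^ (p - 1) * F (x ^ 2 / (1 - x) ^ 2) +
        (1 - x) ^ p * F' (x ^ 2 / (1 - x) ^ 2) * (2 * x / (1 - x) ^ 3)) x := by
  have hpow := ((hasDerivAt_id' x).const_sub 1).rpow_const (p := p) (Or.inl (by linarith))
  refine (hpow.fun_mul (hF.comp x (hasDerivAt_sq_div_one_sub_sq hx.ne))).congr_deriv ?_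
  rw [Function.comp_apply]
  ring

theorem heun_of_hypergeometric {a : ℝ} {F F' F'' H : ℝ → ℝ}
    (hF : ∀ t, |t| < 1 → HasDerivAt F (F' t) t) (hF' : ∀ t, |t| < 1 → HasDerivAt F' (F'' t) t)
    (hode : ∀ t, |t| < 1 → t * (1 - t) * F'' t + (1 - (a + a + 1) * t) * F' t - a * a * F t = 0)
    (hH : ∀ x < 1 / 2, H x = (1 - x) ^ (-(2 * a)) * F (x ^ 2 / (1 - x) ^ 2))
    {x : ℝ} (hx₀ : x ≠ 0) (hx : x < 1 / 2) :
    DifferentiableAt ℝ H x ∧ DifferentiableAt ℝ (deriv H) x ∧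
      deriv (deriv H) x + (1 / x + 1 / (x - 1) + 2 * a / (x - 1 / 2)) * deriv H x +
        (2 * a * x - a) / (x * (x - 1) * (x - 1 / 2)) * H x = 0 := by
  have hT : ∀ y : ℝ, y < 1 / 2 → |y ^ 2 / (1 - y) ^ 2| < 1 := fun y hy => by
    rw [abs_of_nonneg (by positivity), div_lt_one (by nlinarith)]
    nlinarith
  have hH₁ : ∀ y ∈ Set.Iio (1 / 2 : ℝ), HasDerivAt H
      (2 * a * ((1 - y) ^ (-(2 * a) - 1) * F (y ^ 2 / (1 - y) ^ 2)) +
        (1 - y) ^ (-(2 * a)) * F' (y ^ 2 / (1 - y) ^ 2) * (2 * y / (1 - y) ^ 3)) y := by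
    intro y hy
    have hHy : H =ᶠ[𝓝 y] fun y => (1 - y) ^ (-(2 * a)) * F (y ^ 2 / (1 - y) ^ 2) :=
      eventually_of_mem (isOpen_Iio.mem_nhds hy) hH
    refine ((hasDerivAt_one_sub_rpow_mul_comp _ (by linarith [hy.out])
      (hF _ (hT y hy))).congr_of_eventuallyEq hHy).congr_deriv (by ring)
  have hH₂ := hasDerivAt_deriv_of_isOpen isOpen_Iio hH₁ (fun y hy =>
    ((hasDerivAt_one_sub_rpow_mul_comp _ (by linarith [hy.out]) (hF _ (hT y hy))).const_mul
      (2 * a)).add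
      ((hasDerivAt_one_sub_rpow_mul_comp _ (by linarith [hy.out]) (hF' _ (hT y hy))).mul
        (hasDerivAt_two_mul_div_one_sub_pow_three (by linarith [hy.out])))) hx
  refine ⟨(hH₁ x hx).differentiableAt, hH₂.differentiableAt, ?_⟩
  rw [hH₂.deriv, (hH₁ x hx).deriv, hH x hx]
  have h₁ : 1 - x ≠ 0 := by linarith
  have h₂ : x - 1 ≠ 0 := by linarith
  have h₃ : x - 1 / 2 ≠ 0 := by linarith
  have h₄ : 2 * x - 1 ≠ 0 := by linarith
  have hodeT := hode _ (hT x hx)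
  simp only [Real.rpow_sub_one h₁]
  generalize (1 - x) ^ (-(2 * a)) = E
  generalize F (x ^ 2 / (1 - x) ^ 2) = A at hodeT ⊢
  generalize F' (x ^ 2 / (1 - x) ^ 2) = B at hodeT ⊢
  generalize F'' (x ^ 2 / (1 - x) ^ 2) = C at hodeT ⊢
  -- the Heun operator applied to `H` is this multiple of the hypergeometric one at `x²/(1-x)²`
  linear_combination (norm := skip) (2 * E / ((x - 1) * (x - 1 / 2) * (1 - x))) * hodeT
  field_simp
  ring

theorem stmt_6_general (c n : ℝ)
    (H : ℝ → ℝ)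
    (hH : ∀ x : ℝ, H x = ∑' k : ℕ,
      ((ascPochhammer ℝ k).eval (n / c) / (k.factorial : ℝ) * (-x) ^ k *
          (1 - x) ^ (-(n / c) - (k : ℝ))) ^ 2) :
    (∀ x : ℝ, x < 0 → DifferentiableAt ℝ H x ∧ DifferentiableAt ℝ (deriv H) x) ∧
    (∀ x : ℝ, x < 0 →
      deriv (deriv H) x +
        (1 / x + 1 / (x - 1) + (2 * n / c) / (x - 1 / 2)) * deriv H x +
        ((2 * n / c) * x - n / c) / (x * (x - 1) * (x - 1 / 2)) * H x = 0) := by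
  have hb := polynomiallyBounded_ordinaryHypergeometricCoefficient_one (n / c) (n / c)
  have hHF : ∀ x < 1 / 2,
      H x = (1 - x) ^ (-(2 * (n / c))) * ₂F₁ (n / c) (n / c) 1 (x ^ 2 / (1 - x) ^ 2) :=
    fun x hx => (hH x).trans (tsum_sq_eq_ordinaryHypergeometric _ (by linarith))
  -- `₂F₁ a b c` unfolds to `ofScalarsSum` of its coefficients
  have hHeun x (hx : x < 0) := heun_of_hypergeometric (fun t ht => hb.hasDerivAt ht)
    (fun t ht => hb.deriv.hasDerivAt ht)
    (fun t ht => hb.hypergeometric_ode (ordinaryHypergeometricCoefficient_one_succ _ _) ht)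
    hHF hx.ne (by linarith)
  rw [show 2 * n / c = 2 * (n / c) by ring]
  exact ⟨fun x hx => ⟨(hHeun x hx).1, (hHeun x hx).2.1⟩, fun x hx => (hHeun x hx).2.2⟩

/-- For `c > 0`, `n > c`, the function `H(x) = S_{n,c}(-x/c)` is twice
differentiable on `(-∞,0)` and satisfies there the Heun equation
`H'' + (1/x + 1/(x-1) + (2n/c)/(x-1/2)) H' + ((2n/c)x - n/c)/(x(x-1)(x-1/2)) H = 0`. -/
theorem stmt_6 (c n : ℝ) (hc : 0 < c) (hn : c < n)
    (H : ℝ → ℝ)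
    (hH : ∀ x : ℝ, H x = ∑' k : ℕ,
      ((ascPochhammer ℝ k).eval (n / c) / (k.factorial : ℝ) * (-x) ^ k *
          (1 - x) ^ (-(n / c) - (k : ℝ))) ^ 2) :
    (∀ x : ℝ, x < 0 → DifferentiableAt ℝ H x ∧ DifferentiableAt ℝ (deriv H) x) ∧
    (∀ x : ℝ, x < 0 →
      deriv (deriv H) x +
        (1 / x + 1 / (x - 1) + (2 * n / c) / (x - 1 / 2)) * deriv H x +
        ((2 * n / c) * x - n / c) / (x * (x - 1) * (x - 1 / 2)) * H x = 0) :=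
  stmt_6_general c n H hH
end

section
/- Let $n\in\mathbb{N}$, $n\ge1$, and define $F_n(x)=\sum_{k=0}^{n}\binom{n}{k}^2 x^{2k}(1-x)^{2(n-k)}$. Then for every $x\in[0,1]$, $F_n(x)\le\frac{1}{\sqrt{1+4(n-1)x(1-x)}}$. -/
/-!
Put `q = (1 - 2x)²`. The sums `Fₘ(x)` are rescaled Legendre polynomials,
`Fₘ = q^{m/2} Pₘ((1 + q)/(2√q))` (this is `scaledLegendre q m`): they satisfy Bonnet's three-term
recurrence, and their generating function `G` satisfies `G(t)² (1 - t)(1 - qt) = 1`, so that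
`∑_{i+j=N} Fᵢ Fⱼ = 1 + q + ⋯ + q^N`. A Turán-type identity shows that `(Fₘ)` is log-convex, hence
`Fᵢ Fⱼ ≥ Fₙ²` whenever `i + j = 2n`. Therefore
`(2n + 1) Fₙ² ≤ 1 + q + ⋯ + q^{2n} ≤ (2n + 1) / (1 + (n - 1)(1 - q))`, and `1 - q = 4x(1 - x)`.
-/

open Finset PowerSeries

section LogConvexSeq

variable {u : ℕ → ℝ}

theorem mul_le_mul_succ_of_sq_le_mul (hpos : ∀ m, 0 < u m)
    (hlc : ∀ m, u (m + 1) ^ 2 ≤ u m * u (m + 2)) {i j : ℕ} (hij : i ≤ j) :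
    u (i + 1) * u j ≤ u i * u (j + 1) := by
  have hmono : Monotone fun k => u (k + 1) / u k := by
    refine monotone_nat_of_le_succ fun k => ?_
    rw [div_le_div_iff₀ (hpos k) (hpos (k + 1)), ← pow_two, mul_comm]
    exact hlc k
  have := hmono hij
  rwa [div_le_div_iff₀ (hpos i) (hpos j), mul_comm (u (j + 1))] at this

theorem sq_le_mul_of_sq_le_mul (hpos : ∀ m, 0 < u m)
    (hlc : ∀ m, u (m + 1) ^ 2 ≤ u m * u (m + 2)) (d i : ℕ) :
    u (i + d) ^ 2 ≤ u i * u (i + 2 * d) := by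
  induction d generalizing i with
  | zero => simp [pow_two]
  | succ d ih =>
    calc u (i + (d + 1)) ^ 2 = u (i + 1 + d) ^ 2 := by rw [add_comm d, ← add_assoc]
      _ ≤ u (i + 1) * u (i + 1 + 2 * d) := ih (i + 1)
      _ ≤ u i * u (i + 1 + 2 * d + 1) := mul_le_mul_succ_of_sq_le_mul hpos hlc (by omega)
      _ = u i * u (i + 2 * (d + 1)) := by ring_nf

theorem mul_sq_le_sum_antidiagonal (hpos : ∀ m, 0 < u m)
    (hlc : ∀ m, u (m + 1) ^ 2 ≤ u m * u (m + 2)) (n : ℕ) :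
    (2 * n + 1) * u n ^ 2 ≤ ∑ p ∈ antidiagonal (2 * n), u p.1 * u p.2 := by
  have hterm (i j : ℕ) (h : i + j = 2 * n) (hi : i ≤ n) : u n ^ 2 ≤ u i * u j := by
    have := sq_le_mul_of_sq_le_mul hpos hlc (n - i) i
    rwa [Nat.add_sub_cancel' hi, show i + 2 * (n - i) = j by omega] at this
  calc (2 * n + 1) * u n ^ 2 = ∑ _p ∈ antidiagonal (2 * n), u n ^ 2 := by simp
    _ ≤ ∑ p ∈ antidiagonal (2 * n), u p.1 * u p.2 := by
      refine sum_le_sum fun p hp => ?_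
      rw [HasAntidiagonal.mem_antidiagonal] at hp
      rcases le_total p.1 n with h | h
      · exact hterm p.1 p.2 hp h
      · rw [mul_comm]; exact hterm p.2 p.1 (by omega) (by omega)

end LogConvexSeq

section GeomSum

variable {q : ℝ}

theorem sum_range_pow_le (hq₀ : 0 ≤ q) (hq₁ : q ≤ 1) (n : ℕ) :
    ∑ i ∈ range (2 * n + 1), q ^ i ≤ 1 + n * (q + q ^ (2 * n)) := by
  have hpair (i : ℕ) (hi : i ∈ range (2 * n)) :
      q ^ (i + 1) + q ^ (2 * n - i) ≤ q + q ^ (2 * n) := by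
    obtain ⟨j, hj⟩ : ∃ j, 2 * n = i + (j + 1) :=
      ⟨2 * n - i - 1, by have := mem_range.mp hi; omega⟩
    have h₁ : q ^ i ≤ 1 := pow_le_one₀ hq₀ hq₁
    have h₂ : q ^ (j + 1) ≤ q := pow_le_of_le_one hq₀ hq₁ (Nat.succ_ne_zero j)
    rw [hj, Nat.add_sub_cancel_left, pow_succ q i, pow_add q i (j + 1)]
    nlinarith [mul_nonneg (sub_nonneg.2 h₁) (sub_nonneg.2 h₂)]
  have hreflect : ∑ i ∈ range (2 * n), q ^ (2 * n - i) = ∑ i ∈ range (2 * n), q ^ (i + 1) := by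
    rw [← sum_range_reflect]
    refine sum_congr rfl fun i hi => ?_
    rw [show 2 * n - (2 * n - 1 - i) = i + 1 by have := mem_range.mp hi; omega]
  have := sum_le_sum hpair
  rw [sum_add_distrib, hreflect, sum_const, card_range, nsmul_eq_mul] at this
  rw [sum_range_succ', pow_zero]
  push_cast at this
  linarith

theorem sum_range_pow_mul_le (hq₀ : 0 ≤ q) (hq₁ : q ≤ 1) (n : ℕ) :
    (∑ i ∈ range (2 * n + 1), q ^ i) * (1 + (n - 1) * (1 - q)) ≤ 2 * n + 1 := by
  have hS := sum_range_pow_le hq₀ hq₁ n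
  have hgeom := geom_sum_mul q (2 * n + 1)
  have h₁ : q ^ (2 * n) ≤ 1 := pow_le_one₀ hq₀ hq₁
  have h₀ : 0 ≤ q ^ (2 * n) := pow_nonneg hq₀ _
  rw [pow_succ] at hgeom
  nlinarith [mul_nonneg (Nat.cast_nonneg n : (0 : ℝ) ≤ n)
    (mul_nonneg (sub_nonneg.2 hq₁) (sub_nonneg.2 h₁))]

end GeomSum

section HomogeneousSum

variable {R : Type*} [CommRing R] (u v : R)

def homogeneousSum (c : ℕ → R) (m : ℕ) : R :=
  ∑ k ∈ range (m + 1), c k * u ^ k * v ^ (m - k)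

def shiftCoeff (c : ℕ → R) : ℕ → R
  | 0 => 0
  | k + 1 => c k

theorem v_mul_homogeneousSum {c : ℕ → R} {m : ℕ} (hc : c (m + 1) = 0) :
    v * homogeneousSum u v c m = homogeneousSum u v c (m + 1) := by
  rw [homogeneousSum, homogeneousSum, sum_range_succ _ (m + 1), hc, zero_mul, zero_mul, add_zero,
    mul_sum]
  refine sum_congr rfl fun k hk => ?_
  rw [Nat.sub_add_comm (mem_range_succ_iff.mp hk), pow_succ]
  ring

theorem u_mul_homogeneousSum (c : ℕ → R) (m : ℕ) :
    u * homogeneousSum u v c m = homogeneousSum u v (shiftCoeff c) (m + 1) := by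
  rw [homogeneousSum, homogeneousSum, sum_range_succ' _ (m + 1), mul_sum]
  simp only [shiftCoeff, zero_mul, add_zero, Nat.add_sub_add_right, pow_succ]
  exact sum_congr rfl fun k _ => by ring

end HomogeneousSum

theorem choose_sq_rec (m k : ℕ) :
    ((m : ℤ) + 2) * ((m + 2).choose (k + 2) : ℤ) ^ 2 =
      (2 * m + 3) * (((m + 1).choose (k + 1) : ℤ) ^ 2 + ((m + 1).choose (k + 2) : ℤ) ^ 2)
      - (m + 1) * ((m.choose k : ℤ) ^ 2 - 2 * (m.choose (k + 1) : ℤ) ^ 2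
        + (m.choose (k + 2) : ℤ) ^ 2) := by
  refine Int.cast_injective (α := ℚ) ?_
  have r₁ := congrArg (Nat.cast : ℕ → ℚ) (Nat.add_one_mul_choose_eq m k)
  have r₂ := congrArg (Nat.cast : ℕ → ℚ) (Nat.add_one_mul_choose_eq (m + 1) (k + 1))
  simp only [Nat.choose_succ_succ'] at r₁ r₂ ⊢
  push_cast at r₁ r₂ ⊢
  have hb : (m.choose (k + 1) : ℚ) = (m - k) * m.choose k / (k + 1) := by
    rw [eq_div_iff (by positivity)]; linear_combination -r₁
  have hc : (m.choose (k + 2) : ℚ) = (m - k - 1) * m.choose (k + 1) / (k + 2) := by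
    rw [eq_div_iff (by positivity)]; linear_combination r₁ - r₂
  rw [hc, hb]
  field_simp
  ring

section ChooseSqSum

variable {R : Type*} [CommRing R] (u v : R)

/-- With `u = x²` and `v = (1 - x)²` this is the sum of the squared Bernstein polynomials. -/
def chooseSqSum (m : ℕ) : R := homogeneousSum u v (fun k => (m.choose k : R) ^ 2) m

theorem chooseSqSum_rec (m : ℕ) :
    (m + 2) * chooseSqSum u v (m + 2) =
      (2 * m + 3) * (u + v) * chooseSqSum u v (m + 1)
        - (m + 1) * (u - v) ^ 2 * chooseSqSum u v m := by
  set c₀ : ℕ → R := fun k => (m.choose k : R) ^ 2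
  set c₁ : ℕ → R := fun k => ((m + 1).choose k : R) ^ 2
  have hc {j i : ℕ} (h : j < i) : ((j.choose i : ℕ) : R) ^ 2 = 0 := by
    simp [Nat.choose_eq_zero_of_lt h]
  have hv₀ := v_mul_homogeneousSum u v (c := c₀) (hc (Nat.lt_succ_self m))
  have hvv := v_mul_homogeneousSum u v (c := c₀) (m := m + 1) (hc (by omega))
  have hv₁ := v_mul_homogeneousSum u v (c := c₁) (hc (Nat.lt_succ_self (m + 1)))
  have huv := u_mul_homogeneousSum u v c₀ (m + 1)
  have huu := u_mul_homogeneousSum u v (shiftCoeff c₀) (m + 1)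
  rw [chooseSqSum, chooseSqSum, chooseSqSum,
    show (2 * m + 3) * (u + v) * homogeneousSum u v c₁ (m + 1)
        - (m + 1) * (u - v) ^ 2 * homogeneousSum u v c₀ m
      = (2 * m + 3) * (u * homogeneousSum u v c₁ (m + 1) + v * homogeneousSum u v c₁ (m + 1))
        - (m + 1) * (u * (u * homogeneousSum u v c₀ m) - 2 * (u * (v * homogeneousSum u v c₀ m))
          + v * (v * homogeneousSum u v c₀ m)) by ring,
    u_mul_homogeneousSum, u_mul_homogeneousSum, hv₀, hv₁, huu, huv, hvv]
  simp only [homogeneousSum, mul_sum, ← sum_add_distrib, ← sum_sub_distrib]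
  refine sum_congr rfl fun k _ => ?_
  rcases k with _ | _ | k
  · simp only [shiftCoeff, c₀, c₁, Nat.choose_zero_right, tsub_zero]; push_cast; ring
  · simp only [shiftCoeff, c₀, c₁, zero_add, Nat.choose_zero_right, Nat.choose_one_right]
    push_cast; ring
  · have h := congrArg (Int.cast : ℤ → R) (choose_sq_rec m k)
    push_cast at h
    simp only [shiftCoeff, c₀, c₁]
    linear_combination (u ^ (k + 2) * v ^ (m + 2 - (k + 2))) * h

end ChooseSqSum

noncomputable def scaledLegendre (q : ℝ) : ℕ → ℝ
  | 0 => 1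
  | 1 => (1 + q) / 2
  | m + 2 => ((1 + q) * (2 * m + 3) / 2 * scaledLegendre q (m + 1)
      - q * (m + 1) * scaledLegendre q m) / (m + 2)

@[simp]
theorem scaledLegendre_zero (q : ℝ) : scaledLegendre q 0 = 1 := rfl

@[simp]
theorem scaledLegendre_one (q : ℝ) : scaledLegendre q 1 = (1 + q) / 2 := rfl

theorem scaledLegendre_rec (q : ℝ) (m : ℕ) :
    (m + 2) * scaledLegendre q (m + 2) =
      (1 + q) * (2 * m + 3) / 2 * scaledLegendre q (m + 1) - q * (m + 1) * scaledLegendre q m := by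
  rw [scaledLegendre]; field_simp

theorem chooseSqSum_eq_scaledLegendre {u v : ℝ} (h : 2 * (u + v) = 1 + (u - v) ^ 2) (m : ℕ) :
    chooseSqSum u v m = scaledLegendre ((u - v) ^ 2) m := by
  induction m using Nat.twoStepInduction with
  | zero => simp [chooseSqSum, homogeneousSum, scaledLegendre]
  | one =>
    simp only [chooseSqSum, homogeneousSum, sum_range_succ, Nat.choose_zero_right,
      Nat.choose_self, Nat.cast_one, scaledLegendre_one]
    linear_combination h / 2
  | more m ih₀ ih₁ =>
    refine mul_left_cancel₀ (by positivity : (m : ℝ) + 2 ≠ 0) ?_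
    rw [chooseSqSum_rec, scaledLegendre_rec, ih₀, ih₁]
    linear_combination (2 * m + 3) / 2 * scaledLegendre ((u - v) ^ 2) (m + 1) * h

section PowerSeries

variable (q : ℝ)

theorem derivative_mk_scaledLegendre :
    (1 - C (1 + q) * X + C q * X ^ 2) * d⁄dX ℝ (PowerSeries.mk (scaledLegendre q)) =
      (C ((1 + q) / 2) - C q * X) * PowerSeries.mk (scaledLegendre q) := by
  ext n
  simp only [pow_two, sub_mul, add_mul, one_mul, mul_assoc, map_add, map_sub, coeff_C_mul]
  rcases n with _ | _ | n
  · simp [coeff_derivative, scaledLegendre]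
  · have h := scaledLegendre_rec q 0
    simp only [coeff_derivative, coeff_succ_X_mul, coeff_zero_X_mul, coeff_mk, zero_add,
      Nat.cast_zero, Nat.cast_one, scaledLegendre_zero, scaledLegendre_one] at h ⊢
    linear_combination h
  · simp only [coeff_derivative, coeff_succ_X_mul, coeff_mk, Nat.cast_add, Nat.cast_one]
    have h := scaledLegendre_rec q (n + 1)
    push_cast at h
    linear_combination h

theorem mk_scaledLegendre_sq_mul :
    PowerSeries.mk (scaledLegendre q) ^ 2 * ((1 - X) * (1 - C q * X)) = 1 := by
  set G := PowerSeries.mk (scaledLegendre q)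
  have hP : (1 - X) * (1 - C q * X) = 1 - C (1 + q) * X + C q * X ^ 2 := by
    rw [map_add, map_one]; ring
  have hdP : d⁄dX ℝ (1 - C (1 + q) * X + C q * X ^ 2) = -2 * (C ((1 + q) / 2) - C q * X) := by
    have h₂ : (2 : ℝ⟦X⟧) * C ((1 + q) / 2) = 1 + C q := by
      rw [← map_ofNat C 2, ← map_mul, ← map_one C, ← map_add]; ring_nf
    simp only [map_add, map_sub, map_one, Derivation.leibniz, Derivation.leibniz_pow, derivative_X,
      derivative_C, Derivation.map_one_eq_zero, smul_eq_mul, nsmul_eq_mul]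
    linear_combination h₂
  refine derivative.ext ?_ (by simp [G, hP, scaledLegendre])
  -- `(G² P)' = 2 G (P G' + P' G / 2)`, which vanishes by the differential equation for `G`.
  rw [derivative_one, hP, Derivation.leibniz, Derivation.leibniz_pow, hdP, smul_eq_mul, smul_eq_mul]
  linear_combination (2 * G) * derivative_mk_scaledLegendre q

theorem sum_antidiagonal_scaledLegendre_mul (N : ℕ) :
    ∑ p ∈ antidiagonal N, scaledLegendre q p.1 * scaledLegendre q p.2 =
      ∑ i ∈ range (N + 1), q ^ i := by
  have hgeom : PowerSeries.mk (q ^ ·) * (1 - C q * X) = 1 := by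
    simpa [rescale_mk] using congrArg (rescale q) (mk_one_mul_one_sub_eq_one ℝ)
  have h : PowerSeries.mk (scaledLegendre q) ^ 2 = PowerSeries.mk (q ^ ·) * PowerSeries.mk 1 := by
    linear_combination (PowerSeries.mk (q ^ ·) * PowerSeries.mk 1) * mk_scaledLegendre_sq_mul q
      - PowerSeries.mk (scaledLegendre q) ^ 2 * (PowerSeries.mk 1 * (1 - X)) * hgeom
      - PowerSeries.mk (scaledLegendre q) ^ 2 * mk_one_mul_one_sub_eq_one ℝ
  have := congrArg (coeff N) h
  rw [pow_two, coeff_mul, coeff_mul, Nat.sum_antidiagonal_eq_sum_range_succ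
    (fun i j => coeff i (PowerSeries.mk (q ^ ·)) * coeff j (PowerSeries.mk 1))] at this
  simpa using this

end PowerSeries

section LogConvex

variable {q : ℝ}

theorem scaledLegendre_pos_and_mul_le_succ (hq : 0 ≤ q) (m : ℕ) :
    0 < scaledLegendre q m ∧ (1 + q) / 2 * scaledLegendre q m ≤ scaledLegendre q (m + 1) := by
  induction m with
  | zero => simp
  | succ m ih =>
    obtain ⟨hpos, hle⟩ := ih
    refine ⟨(mul_pos (by linarith) hpos).trans_le hle, ?_⟩
    have hqL : q * scaledLegendre q m ≤ (1 + q) / 2 * scaledLegendre q (m + 1) := by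
      nlinarith [sq_nonneg (1 - q)]
    have hrec := scaledLegendre_rec q m
    show (1 + q) / 2 * scaledLegendre q (m + 1) ≤ scaledLegendre q (m + 2)
    nlinarith

theorem scaledLegendre_pos (hq : 0 ≤ q) (m : ℕ) : 0 < scaledLegendre q m :=
  (scaledLegendre_pos_and_mul_le_succ hq m).1

theorem mul_scaledLegendre_le_succ (hq : 0 ≤ q) (m : ℕ) :
    (1 + q) / 2 * scaledLegendre q m ≤ scaledLegendre q (m + 1) :=
  (scaledLegendre_pos_and_mul_le_succ hq m).2

theorem scaledLegendre_succ_le (hq₀ : 0 ≤ q) (hq₁ : q ≤ 1) (m : ℕ) :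
    scaledLegendre q (m + 1) ≤ scaledLegendre q m := by
  induction m with
  | zero => rw [scaledLegendre_zero, scaledLegendre_one]; linarith
  | succ m ih =>
    have hrec := scaledLegendre_rec q m
    have hpos := scaledLegendre_pos hq₀ (m + 1)
    have hq : q * (m + 1) * scaledLegendre q (m + 1) ≤ q * (m + 1) * scaledLegendre q m :=
      mul_le_mul_of_nonneg_left ih (by positivity)
    show scaledLegendre q (m + 2) ≤ scaledLegendre q (m + 1)
    nlinarith

theorem scaledLegendre_turan (q : ℝ) (m : ℕ) :
    (m + 3) * (scaledLegendre q (m + 1) * scaledLegendre q (m + 3) - scaledLegendre q (m + 2) ^ 2) =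
      q * (m + 1) * (scaledLegendre q m * scaledLegendre q (m + 2) - scaledLegendre q (m + 1) ^ 2)
      + ((1 - q) / 2) ^ 2 * scaledLegendre q (m + 1) ^ 2
      - (scaledLegendre q (m + 2) - (1 + q) / 2 * scaledLegendre q (m + 1)) ^ 2 := by
  have h₀ := scaledLegendre_rec q m
  have h₁ := scaledLegendre_rec q (m + 1)
  push_cast at h₁
  linear_combination scaledLegendre q (m + 1) * h₁ - scaledLegendre q (m + 2) * h₀

theorem scaledLegendre_sq_le_mul (hq₀ : 0 ≤ q) (hq₁ : q ≤ 1) (m : ℕ) :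
    scaledLegendre q (m + 1) ^ 2 ≤ scaledLegendre q m * scaledLegendre q (m + 2) := by
  induction m with
  | zero =>
    have h := scaledLegendre_rec q 0
    simp only [zero_add, scaledLegendre_zero, scaledLegendre_one, Nat.cast_zero] at h ⊢
    nlinarith [sq_nonneg (1 - q)]
  | succ m ih =>
    have hT := scaledLegendre_turan q m
    have h₁ := mul_scaledLegendre_le_succ hq₀ (m + 1)
    have h₂ := scaledLegendre_succ_le hq₀ hq₁ (m + 1)
    have hpos := scaledLegendre_pos hq₀ (m + 1)
    have hgap : (scaledLegendre q (m + 2) - (1 + q) / 2 * scaledLegendre q (m + 1)) ^ 2 ≤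
        ((1 - q) / 2) ^ 2 * scaledLegendre q (m + 1) ^ 2 := by
      rw [← mul_pow]
      exact pow_le_pow_left₀ (by linarith) (by linarith) 2
    have hE : 0 ≤ q * (m + 1) *
        (scaledLegendre q m * scaledLegendre q (m + 2) - scaledLegendre q (m + 1) ^ 2) :=
      mul_nonneg (by positivity) (by linarith)
    nlinarith

end LogConvex

/-- For `n ≥ 1` and `x ∈ [0,1]`, `F_n(x) ≤ 1/√(1+4(n-1)x(1-x))`. -/
theorem stmt_16 (n : ℕ) (hn : 1 ≤ n) (x : ℝ) (hx : x ∈ Set.Icc (0:ℝ) 1) :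
    (∑ k ∈ Finset.range (n + 1), (n.choose k : ℝ) ^ 2 * x ^ (2 * k) * (1 - x) ^ (2 * (n - k))) ≤
      1 / Real.sqrt (1 + 4 * ((n : ℝ) - 1) * x * (1 - x)) := by
  obtain ⟨hx₀, hx₁⟩ := hx
  set q := (x ^ 2 - (1 - x) ^ 2) ^ 2
  have hq₀ : 0 ≤ q := sq_nonneg _
  have hq₁ : q ≤ 1 := by nlinarith
  have hF : ∑ k ∈ range (n + 1), (n.choose k : ℝ) ^ 2 * x ^ (2 * k) * (1 - x) ^ (2 * (n - k))
      = scaledLegendre q n := by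
    rw [← chooseSqSum_eq_scaledLegendre (by ring), chooseSqSum, homogeneousSum]
    simp only [pow_mul]
  have hT : 1 + 4 * ((n : ℝ) - 1) * x * (1 - x) = 1 + (n - 1) * (1 - q) := by ring
  have hT₁ : 1 ≤ 1 + ((n : ℝ) - 1) * (1 - q) :=
    le_add_of_nonneg_right (mul_nonneg (sub_nonneg.2 (by exact_mod_cast hn)) (by linarith))
  have hsq : scaledLegendre q n ^ 2 * (1 + (n - 1) * (1 - q)) ≤ 1 := by
    have h₁ := mul_sq_le_sum_antidiagonal (scaledLegendre_pos hq₀)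
      (scaledLegendre_sq_le_mul hq₀ hq₁) n
    rw [sum_antidiagonal_scaledLegendre_mul] at h₁
    have h₂ := mul_le_mul_of_nonneg_right h₁ (by linarith : 0 ≤ 1 + ((n : ℝ) - 1) * (1 - q))
    have h₃ := sum_range_pow_mul_le hq₀ hq₁ n
    exact (mul_le_iff_le_one_right (by positivity : (0 : ℝ) < 2 * n + 1)).mp
      (by simpa only [mul_assoc] using h₂.trans h₃)
  rw [hF, hT, one_div, ← Real.sqrt_inv, Real.le_sqrt (scaledLegendre_pos hq₀ n).le (by positivity),
    ← one_div, le_div_iff₀ (by linarith)]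
  exact hsq
end
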